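/- Let φ be a repulsive, tempered potential on ℝ^d with C_φ := ∫_{ℝ^d}(1−e^{−φ(x)})dx, and let Λ ⊂ ℝ^d be a region with |Λ| > 0. For real λ ≥ 0 set Z_Λ(λ) = Σ_{k≥0} (λ^k/k!) ∫_{Λ^k} ∏_{1≤i<j≤k} e^{−φ(x_i−x_j)} dx_1⋯dx_k and Z′_Λ(λ) = Σ_{k≥1} (λ^{k−1}/(k−1)!) ∫_{Λ^k} ∏_{1≤i<j≤k} e^{−φ(x_i−x_j)} dx_1⋯dx_k (the derivative of Z_Λ in λ). Then the finite volume density ρ_Λ(λ) := λ·Z′_Λ(λ)/(|Λ|·Z_Λ(λ)) satisfies ρ_Λ(λ) ≥ λ/(1 + λ·C_φ). (Lemma 5.3.) -/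

import Mathlib

/-!
Let `I_k = ∫_{Λ^k} ∏_{i<j} e^{-φ(x_i - x_j)}`. Integrating out the first of `k + 1` particles,
the Weierstrass inequality `∏ (1 - u_j) ≥ 1 - ∑ u_j` and translation invariance of Lebesgue
measure give `|Λ| I_k ≤ I_{k+1} + k C_φ I_k`. Multiplied by `λ^k / k!` and summed over `k`, the
last term becomes `C_φ λ Z′_Λ(λ)`, so `|Λ| Z_Λ(λ) ≤ (1 + λ C_φ) Z′_Λ(λ)`; since `Z_Λ(λ) ≥ 1`
this is the claimed bound.
-/

open MeasureTheory Filter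

noncomputable section

/-- Euclidean space ℝ^d. -/
abbrev Euc (d : ℕ) := EuclideanSpace ℝ (Fin d)

/-- `e^{-t}` for `t ∈ [0,∞]`, with the convention `e^{-∞} = 0`. -/
def expNeg (t : ENNReal) : ℝ := if t = ⊤ then 0 else Real.exp (-t.toReal)

/-- The Boltzmann pair weight `∏_{1 ≤ i < j ≤ k} e^{-φ(x_i - x_j)}`. -/
def pairWeight {d : ℕ} (φ : Euc d → ENNReal) (k : ℕ) (x : Fin k → Euc d) : ℝ :=
  ∏ p ∈ Finset.univ.filter (fun p : Fin k × Fin k => p.1 < p.2), expNeg (φ (x p.1 - x p.2))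

/-- The grand canonical partition function `Z_Λ(λ)` at constant real activity `λ`. -/
def Zreal {d : ℕ} (φ : Euc d → ENNReal) (Λ : Set (Euc d)) (lam : ℝ) : ℝ :=
  ∑' k : ℕ, lam ^ k / (Nat.factorial k) *
    ∫ x in Set.univ.pi (fun _ : Fin k => Λ), pairWeight φ k x

/-- The derivative of the partition function in `λ`:
`Z′_Λ(λ) = Σ_{k≥1} λ^{k−1}/(k−1)! ∫_{Λ^k} ∏_{i<j} e^{−φ(x_i−x_j)}`
(reindexed as a sum over `k ≥ 0` of terms with `k+1` points). -/
def Zreal' {d : ℕ} (φ : Euc d → ENNReal) (Λ : Set (Euc d)) (lam : ℝ) : ℝ :=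
  ∑' k : ℕ, lam ^ k / (Nat.factorial k) *
    ∫ x in Set.univ.pi (fun _ : Fin (k + 1) => Λ), pairWeight φ (k + 1) x

theorem Finset.one_sub_sum_one_sub_le_prod {ι : Type*} (s : Finset ι) {f : ι → ℝ}
    (h0 : ∀ i ∈ s, 0 ≤ f i) (h1 : ∀ i ∈ s, f i ≤ 1) :
    1 - ∑ i ∈ s, (1 - f i) ≤ ∏ i ∈ s, f i := by
  classical
  induction s using Finset.induction_on with
  | empty => simp
  | insert a s ha ih =>
    simp only [Finset.mem_insert, forall_eq_or_imp] at h0 h1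
    rw [Finset.sum_insert ha, Finset.prod_insert ha]
    have hP0 : 0 ≤ ∏ i ∈ s, f i := Finset.prod_nonneg h0.2
    have hP1 : ∏ i ∈ s, f i ≤ 1 := Finset.prod_le_one h0.2 h1.2
    nlinarith [ih h0.2 h1.2]

theorem integral_pi_fin_succ {α E : Type*} [MeasurableSpace α] [NormedAddCommGroup E]
    [NormedSpace ℝ E] (μ : Measure α) [SigmaFinite μ] {k : ℕ} (f : (Fin (k + 1) → α) → E) :
    ∫ x, f x ∂Measure.pi (fun _ => μ) =
      ∫ p, f (Fin.cons p.1 p.2) ∂μ.prod (Measure.pi fun _ : Fin k => μ) := by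
  have := (measurePreserving_piFinSuccAbove (fun _ : Fin (k + 1) => μ) 0).symm.integral_comp' f
  simpa [MeasurableEquiv.piFinSuccAbove_symm_apply, Fin.insertNth_zero', Fin.consEquiv]
    using this.symm

theorem measurable_fin_cons {α : Type*} [MeasurableSpace α] {k : ℕ} :
    Measurable fun p : α × (Fin k → α) => (Fin.cons p.1 p.2 : Fin (k + 1) → α) := by
  have := (MeasurableEquiv.piFinSuccAbove (fun _ : Fin (k + 1) => α) 0).symm.measurable
  simpa [MeasurableEquiv.piFinSuccAbove_symm_apply, Fin.insertNth_zero', Fin.consEquiv]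
    using this

theorem integrable_of_measurable_of_nonneg_of_le_one {α : Type*} [MeasurableSpace α]
    {μ : Measure α} [IsFiniteMeasure μ] {f : α → ℝ} (hf : Measurable f) (h0 : ∀ x, 0 ≤ f x)
    (h1 : ∀ x, f x ≤ 1) : Integrable f μ :=
  Integrable.of_bound hf.aestronglyMeasurable 1
    (ae_of_all _ fun x => (Real.norm_of_nonneg (h0 x)).trans_le (h1 x))

theorem summable_pow_div_factorial_mul_of_le {x r C : ℝ} {c : ℕ → ℝ} (hx : 0 ≤ x)
    (hc0 : ∀ k, 0 ≤ c k) (hc : ∀ k, c k ≤ C * r ^ k) :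
    Summable fun k => x ^ k / k.factorial * c k := by
  refine Summable.of_nonneg_of_le (fun k => mul_nonneg (by positivity) (hc0 k)) (fun k => ?_)
    ((Real.summable_pow_div_factorial (x * r)).mul_left C)
  calc x ^ k / k.factorial * c k ≤ x ^ k / k.factorial * (C * r ^ k) := by gcongr; exact hc k
    _ = C * ((x * r) ^ k / k.factorial) := by ring

/-- Termwise, `x d/dx` of an exponential generating function. -/
theorem hasSum_natCast_mul_pow_div_factorial_mul {x s : ℝ} {c : ℕ → ℝ}
    (h : HasSum (fun k => x ^ k / k.factorial * c (k + 1)) s) :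
    HasSum (fun k => k * (x ^ k / k.factorial * c k)) (x * s) := by
  have hterm (k : ℕ) : ((k + 1 : ℕ) : ℝ) * (x ^ (k + 1) / (k + 1).factorial * c (k + 1)) =
      x * (x ^ k / k.factorial * c (k + 1)) := by
    push_cast [Nat.factorial_succ]
    field_simp
    ring
  rw [← hasSum_nat_add_iff' 1, Finset.sum_range_one, Nat.cast_zero, zero_mul, sub_zero]
  simpa only [hterm] using h.mul_left x

theorem expNeg_nonneg (t : ENNReal) : 0 ≤ expNeg t := by
  unfold expNeg; split
  · exact le_rfl
  · exact (Real.exp_pos _).le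

theorem expNeg_le_one (t : ENNReal) : expNeg t ≤ 1 := by
  unfold expNeg; split
  · exact zero_le_one
  · exact Real.exp_le_one_iff.2 (neg_nonpos.2 ENNReal.toReal_nonneg)

theorem measurable_expNeg : Measurable expNeg :=
  Measurable.ite (measurableSet_singleton ⊤) measurable_const
    (Real.measurable_exp.comp ENNReal.measurable_toReal.neg)

section PairWeight

variable {d : ℕ} (φ : Euc d → ENNReal)

theorem pairWeight_nonneg (k : ℕ) (x : Fin k → Euc d) : 0 ≤ pairWeight φ k x :=
  Finset.prod_nonneg fun _ _ => expNeg_nonneg _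

theorem pairWeight_le_one (k : ℕ) (x : Fin k → Euc d) : pairWeight φ k x ≤ 1 :=
  Finset.prod_le_one (fun _ _ => expNeg_nonneg _) fun _ _ => expNeg_le_one _

theorem measurable_pairWeight (hφ : Measurable φ) (k : ℕ) : Measurable (pairWeight φ k) :=
  Finset.measurable_prod _ fun p _ => measurable_expNeg.comp <| hφ.comp <|
    (measurable_pi_apply p.1).sub (measurable_pi_apply p.2)

theorem pairWeight_cons (k : ℕ) (y : Euc d) (z : Fin k → Euc d) :
    pairWeight φ (k + 1) (Fin.cons y z) = (∏ j, expNeg (φ (y - z j))) * pairWeight φ k z := by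
  simp [pairWeight, Finset.prod_filter, Fintype.prod_prod_type, Fin.prod_univ_succ,
    Fin.succ_pos]

end PairWeight

/-- `k!` times the canonical partition function of `k` particles in `Λ`. -/
def configurationIntegral {d : ℕ} (φ : Euc d → ENNReal) (Λ : Set (Euc d)) (k : ℕ) : ℝ :=
  ∫ x in Set.univ.pi (fun _ : Fin k => Λ), pairWeight φ k x

section ConfigurationIntegral

variable {d : ℕ} {φ : Euc d → ENNReal} {Λ : Set (Euc d)}

theorem configurationIntegral_eq_integral_pi (k : ℕ) :
    configurationIntegral φ Λ k =
      ∫ x, pairWeight φ k x ∂Measure.pi (fun _ : Fin k => volume.restrict Λ) := by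
  rw [configurationIntegral, volume_pi, Measure.restrict_pi_pi]

theorem configurationIntegral_nonneg (k : ℕ) : 0 ≤ configurationIntegral φ Λ k :=
  integral_nonneg (pairWeight_nonneg φ k)

theorem configurationIntegral_zero : configurationIntegral φ Λ 0 = 1 := by
  simp [configurationIntegral, pairWeight, volume_pi_pi, measureReal_def]

theorem configurationIntegral_le_pow (hΛ : volume Λ ≠ ⊤) (k : ℕ) :
    configurationIntegral φ Λ k ≤ (volume Λ).toReal ^ k := by
  have hfin : volume (Set.univ.pi fun _ : Fin k => Λ) ≠ ⊤ := by
    simp [volume_pi_pi, hΛ]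
  calc configurationIntegral φ Λ k ≤ ∫ _ in Set.univ.pi (fun _ : Fin k => Λ), (1 : ℝ) :=
        integral_mono_of_nonneg (ae_of_all _ (pairWeight_nonneg φ k)) (integrableOn_const hfin)
          (ae_of_all _ (pairWeight_le_one φ k))
    _ = (volume Λ).toReal ^ k := by simp [volume_pi_pi, measureReal_def]

theorem setIntegral_one_sub_expNeg_sub_le (htemp : Integrable fun x : Euc d => 1 - expNeg (φ x))
    (a : Euc d) :
    ∫ y in Λ, (1 - expNeg (φ (y - a))) ≤ ∫ x, (1 - expNeg (φ x)) :=
  (setIntegral_le_integral (htemp.comp_sub_right a)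
    (ae_of_all _ fun _ => sub_nonneg.2 (expNeg_le_one _))).trans_eq
    (integral_sub_right_eq_self (fun x => 1 - expNeg (φ x)) a)

theorem sub_mul_le_setIntegral_prod_expNeg (hφ : Measurable φ)
    (htemp : Integrable fun x : Euc d => 1 - expNeg (φ x)) (hΛ : volume Λ ≠ ⊤) {k : ℕ}
    (z : Fin k → Euc d) :
    (volume Λ).toReal - k * ∫ x, (1 - expNeg (φ x)) ≤ ∫ y in Λ, ∏ j, expNeg (φ (y - z j)) := by
  have : IsFiniteMeasure (volume.restrict Λ) := isFiniteMeasure_restrict.2 hΛ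
  have hint (j : Fin k) : IntegrableOn (fun y => 1 - expNeg (φ (y - z j))) Λ :=
    (htemp.comp_sub_right (z j)).integrableOn
  have hprod : IntegrableOn (fun y => ∏ j, expNeg (φ (y - z j))) Λ :=
    integrable_of_measurable_of_nonneg_of_le_one
      (Finset.measurable_prod _ fun j _ =>
        measurable_expNeg.comp (hφ.comp (measurable_id.sub_const (z j))))
      (fun _ => Finset.prod_nonneg fun _ _ => expNeg_nonneg _)
      (fun _ => Finset.prod_le_one (fun _ _ => expNeg_nonneg _) fun _ _ => expNeg_le_one _)
  calc (volume Λ).toReal - k * ∫ x, (1 - expNeg (φ x))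
      ≤ (volume Λ).toReal - ∑ j, ∫ y in Λ, (1 - expNeg (φ (y - z j))) := by
        gcongr
        simpa using Finset.sum_le_sum fun j (_ : j ∈ Finset.univ) =>
          setIntegral_one_sub_expNeg_sub_le (Λ := Λ) htemp (z j)
    _ = ∫ y in Λ, (1 - ∑ j, (1 - expNeg (φ (y - z j)))) := by
        rw [integral_sub (integrable_const 1) (integrable_finsetSum _ fun j _ => hint j),
          integral_finsetSum _ fun j _ => hint j]
        simp [measureReal_def]
    _ ≤ ∫ y in Λ, ∏ j, expNeg (φ (y - z j)) :=
        integral_mono ((integrable_const 1).sub (integrable_finsetSum _ fun j _ => hint j))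
          hprod fun y => Finset.univ.one_sub_sum_one_sub_le_prod
            (fun _ _ => expNeg_nonneg _) fun _ _ => expNeg_le_one _

theorem integrable_pairWeight_cons (hφ : Measurable φ) (hΛ : volume Λ ≠ ⊤) (k : ℕ) :
    Integrable (fun p : Euc d × (Fin k → Euc d) => pairWeight φ (k + 1) (Fin.cons p.1 p.2))
      ((volume.restrict Λ).prod (Measure.pi fun _ : Fin k => volume.restrict Λ)) :=
  have : IsFiniteMeasure (volume.restrict Λ) := isFiniteMeasure_restrict.2 hΛ
  integrable_of_measurable_of_nonneg_of_le_one
    ((measurable_pairWeight φ hφ _).comp measurable_fin_cons)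
    (fun _ => pairWeight_nonneg φ _ _) (fun _ => pairWeight_le_one φ _ _)

theorem configurationIntegral_succ (hφ : Measurable φ) (hΛ : volume Λ ≠ ⊤) (k : ℕ) :
    configurationIntegral φ Λ (k + 1) =
      ∫ z, (∫ y in Λ, pairWeight φ (k + 1) (Fin.cons y z))
        ∂Measure.pi (fun _ : Fin k => volume.restrict Λ) := by
  rw [configurationIntegral_eq_integral_pi, integral_pi_fin_succ,
    integral_prod_symm _ (integrable_pairWeight_cons hφ hΛ k)]

theorem sub_mul_le_setIntegral_pairWeight_cons (hφ : Measurable φ)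
    (htemp : Integrable fun x : Euc d => 1 - expNeg (φ x)) (hΛ : volume Λ ≠ ⊤) {k : ℕ}
    (z : Fin k → Euc d) :
    ((volume Λ).toReal - k * ∫ x, (1 - expNeg (φ x))) * pairWeight φ k z ≤
      ∫ y in Λ, pairWeight φ (k + 1) (Fin.cons y z) := by
  simp_rw [pairWeight_cons, integral_mul_const]
  exact mul_le_mul_of_nonneg_right (sub_mul_le_setIntegral_prod_expNeg hφ htemp hΛ z)
    (pairWeight_nonneg φ k z)

/-- Integrating out one particle: each of the `k` others excludes at most `C_φ` of the volume. -/
theorem volume_mul_configurationIntegral_le (hφ : Measurable φ)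
    (htemp : Integrable fun x : Euc d => 1 - expNeg (φ x)) (hΛ : volume Λ ≠ ⊤) (k : ℕ) :
    (volume Λ).toReal * configurationIntegral φ Λ k ≤
      configurationIntegral φ Λ (k + 1) +
        k * (∫ x, (1 - expNeg (φ x))) * configurationIntegral φ Λ k := by
  have : IsFiniteMeasure (volume.restrict Λ) := isFiniteMeasure_restrict.2 hΛ
  have hstep : ((volume Λ).toReal - k * ∫ x, (1 - expNeg (φ x))) * configurationIntegral φ Λ k ≤
      configurationIntegral φ Λ (k + 1) := by
    rw [configurationIntegral_succ hφ hΛ, configurationIntegral_eq_integral_pi,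
      ← integral_const_mul]
    exact integral_mono
      ((integrable_of_measurable_of_nonneg_of_le_one (measurable_pairWeight φ hφ k)
        (pairWeight_nonneg φ k) (pairWeight_le_one φ k)).const_mul _)
      (integrable_pairWeight_cons hφ hΛ k).integral_prod_right
      (sub_mul_le_setIntegral_pairWeight_cons hφ htemp hΛ)
  linarith

end ConfigurationIntegral

section PartitionFunction

variable {d : ℕ} {φ : Euc d → ENNReal} {Λ : Set (Euc d)} {lam : ℝ}

theorem hasSum_Zreal (hΛ : volume Λ ≠ ⊤) (hlam : 0 ≤ lam) :
    HasSum (fun k => lam ^ k / k.factorial * configurationIntegral φ Λ k) (Zreal φ Λ lam) :=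
  (summable_pow_div_factorial_mul_of_le (C := 1) hlam configurationIntegral_nonneg
    fun k => by rw [one_mul]; exact configurationIntegral_le_pow hΛ k).hasSum

theorem hasSum_Zreal' (hΛ : volume Λ ≠ ⊤) (hlam : 0 ≤ lam) :
    HasSum (fun k => lam ^ k / k.factorial * configurationIntegral φ Λ (k + 1))
      (Zreal' φ Λ lam) :=
  (summable_pow_div_factorial_mul_of_le hlam (fun k => configurationIntegral_nonneg (k + 1))
    fun k => by rw [← pow_succ']; exact configurationIntegral_le_pow hΛ (k + 1)).hasSum

theorem one_le_Zreal (hΛ : volume Λ ≠ ⊤) (hlam : 0 ≤ lam) : 1 ≤ Zreal φ Λ lam := by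
  simpa [configurationIntegral_zero] using
    le_hasSum (hasSum_Zreal (φ := φ) hΛ hlam) 0 fun k _ =>
      mul_nonneg (by positivity) (configurationIntegral_nonneg k)

theorem volume_mul_Zreal_le (hφ : Measurable φ)
    (htemp : Integrable fun x : Euc d => 1 - expNeg (φ x)) (hΛ : volume Λ ≠ ⊤) (hlam : 0 ≤ lam) :
    (volume Λ).toReal * Zreal φ Λ lam ≤
      (1 + lam * ∫ x, (1 - expNeg (φ x))) * Zreal' φ Λ lam := by
  set C := ∫ x, (1 - expNeg (φ x))
  have hZ' := hasSum_Zreal' (φ := φ) hΛ hlam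
  have hsum := hZ'.add ((hasSum_natCast_mul_pow_div_factorial_mul hZ').mul_left C)
  have hle := hasSum_le (fun k => ?_)
    ((hasSum_Zreal (φ := φ) hΛ hlam).mul_left (volume Λ).toReal) hsum
  · linarith
  · have hcoef : 0 ≤ lam ^ k / k.factorial := by positivity
    have := mul_le_mul_of_nonneg_left (volume_mul_configurationIntegral_le hφ htemp hΛ k) hcoef
    linarith

end PartitionFunction

theorem finite_volume_density_lower_bound_general
    (d : ℕ)
    (φ : Euc d → ENNReal) (hφmeas : Measurable φ)
    (hφtemp : Integrable (fun x : Euc d => 1 - expNeg (φ x)))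
    (Cφ : ℝ) (hC : Cφ = ∫ x : Euc d, (1 - expNeg (φ x)))
    (Λ : Set (Euc d))
    (hΛpos : 0 < (volume Λ).toReal)
    (lam : ℝ) (hlam : 0 ≤ lam) :
    lam / (1 + lam * Cφ) ≤
      lam * Zreal' φ Λ lam / ((volume Λ).toReal * Zreal φ Λ lam) := by
  have hΛ : volume Λ ≠ ⊤ := fun h => by simp [h] at hΛpos
  have hC0 : 0 ≤ Cφ := hC ▸ integral_nonneg fun x => sub_nonneg.2 (expNeg_le_one _)
  have hZ : 0 < Zreal φ Λ lam := one_pos.trans_le (one_le_Zreal hΛ hlam)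
  have hkey := volume_mul_Zreal_le hφmeas hφtemp hΛ hlam
  rw [← hC] at hkey
  rw [div_le_div_iff₀ (by positivity) (mul_pos hΛpos hZ)]
  calc lam * ((volume Λ).toReal * Zreal φ Λ lam)
      ≤ lam * ((1 + lam * Cφ) * Zreal' φ Λ lam) := mul_le_mul_of_nonneg_left hkey hlam
    _ = lam * Zreal' φ Λ lam * (1 + lam * Cφ) := by ring

/-- Lemma 5.3: the finite volume density `ρ_Λ(λ) = λ Z′_Λ(λ)/(|Λ| Z_Λ(λ))`
satisfies `ρ_Λ(λ) ≥ λ/(1 + λ C_φ)`. -/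
theorem finite_volume_density_lower_bound
    (d : ℕ) (hd : 1 ≤ d)
    (φ : Euc d → ENNReal) (hφmeas : Measurable φ)
    (hφsymm : ∀ x, φ (-x) = φ x)
    (hφtemp : Integrable (fun x : Euc d => 1 - expNeg (φ x)))
    (Cφ : ℝ) (hC : Cφ = ∫ x : Euc d, (1 - expNeg (φ x)))
    (Λ : Set (Euc d)) (hΛmeas : MeasurableSet Λ) (hΛbdd : Bornology.IsBounded Λ)
    (hΛpos : 0 < (volume Λ).toReal)
    (lam : ℝ) (hlam : 0 ≤ lam) :
    lam / (1 + lam * Cφ) ≤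
      lam * Zreal' φ Λ lam / ((volume Λ).toReal * Zreal φ Λ lam) :=
  finite_volume_density_lower_bound_general d φ hφmeas hφtemp Cφ hC Λ hΛpos lam hlam

end
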